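/- For every r ≥ 1 and n ∈ ℕ, the q-Frobenius–Euler polynomial expands in the order-r basis as H^{(1)}_{n,q}(x|λ) = (1/(1 − λ)^r) · ∑_{k=0}^{n} A_k · H^{(r)}_{k,q}(x|λ), where A_k = ∑_{m=0}^{n−k} ∑_{l=0}^{r} ∑_{(i_1,…,i_l) ∈ ℕ^l, i_1+⋯+i_l = m} binom(r,l) · (−λ)^{r−l} · C(m; i_1,…,i_l)_q · C(m+k,m)_q · C(n,m+k)_q · H_{n−m−k,q}(λ); here binom(r,l) is the ordinary binomial coefficient, C(m; i_1,…,i_l)_q = [m]_q!/([i_1]_q! ⋯ [i_l]_q!) is the q-multinomial coefficient (with the sum over the empty tuple for l = 0 equal to δ_{m,0}), and H_{n−m−k,q}(λ) = H^{(1)}_{n−m−k,q}(λ) are the q-Frobenius–Euler numbers. -/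

import Mathlib

open Finset Polynomial

/-- The `q`-integer `[n]_q = (1 - q^n)/(1 - q)` viewed in `ℂ`. -/
noncomputable def qInt (q : ℝ) (n : ℕ) : ℂ := (1 - (q : ℂ) ^ n) / (1 - (q : ℂ))

/-- The `q`-factorial `[n]_q! = ∏_{j=1}^n [j]_q`. -/
noncomputable def qFact (q : ℝ) (n : ℕ) : ℂ := ∏ j ∈ Finset.range n, qInt q (j + 1)

/-- The `q`-binomial coefficient `[n]_q!/([k]_q! [n-k]_q!)`. -/
noncomputable def qBinom (q : ℝ) (n k : ℕ) : ℂ := qFact q n / (qFact q k * qFact q (n - k))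

/-- The formal `q`-exponential `e_q(t) = ∑ t^n/[n]_q!` in `ℂ[x][[t]]`. -/
noncomputable def qExp (q : ℝ) : PowerSeries (Polynomial ℂ) :=
  PowerSeries.mk fun n => Polynomial.C (1 / qFact q n)

/-- The formal series `e_q(xt) = ∑ x^n t^n/[n]_q!` in `ℂ[x][[t]]`. -/
noncomputable def qExpX (q : ℝ) : PowerSeries (Polynomial ℂ) :=
  PowerSeries.mk fun n => Polynomial.C (1 / qFact q n) * Polynomial.X ^ n

/-- `H : ℕ → ℂ[x]` is the family of order-`r` `q`-Frobenius-Euler polynomials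
`H^{(r)}_{n,q}(x|λ)`:
`(∑ H_n t^n/[n]_q!) ⬝ (e_q(t) - λ)^r = (1 - λ)^r e_q(xt)` in `ℂ[x][[t]]`. -/
def IsqFrobeniusEulerOrder (q : ℝ) (lam : ℂ) (r : ℕ) (H : ℕ → Polynomial ℂ) : Prop :=
  (PowerSeries.mk fun n => Polynomial.C (1 / qFact q n) * H n) *
      (qExp q - PowerSeries.C (Polynomial.C lam)) ^ r =
    PowerSeries.C (Polynomial.C ((1 - lam) ^ r)) * qExpX q

/-!
Putting `x = 0` in the order-one identity shows that `N(t) = ∑ H_{n,q}(λ) tⁿ/[n]_q!` satisfies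
`(e_q(t) - λ) N(t) = 1 - λ`, so the order-one generating function is `e_q(xt) N(t)`. Multiplying by
`(1 - λ)^r` and inserting the order-`r` identity gives
`(1 - λ)^r ∑ H⁽¹⁾_n tⁿ/[n]_q! = (∑ H⁽ʳ⁾_k tᵏ/[k]_q!) (e_q(t) - λ)^r N(t)`. Expanding
`(e_q(t) - λ)^r` binomially and `e_q(t)^l` over compositions `i₁ + ⋯ + i_l = m`, then comparing
coefficients of `tⁿ`, yields the formula.
-/

lemma qFact_ne_zero {q : ℝ} (hq : |q| < 1) (n : ℕ) : qFact q n ≠ 0 := by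
  have one_sub_pow_ne_zero : ∀ j : ℕ, j ≠ 0 → (1 : ℂ) - (q : ℂ) ^ j ≠ 0 := fun j hj h => by
    have hqj : q ^ j = 1 := by exact_mod_cast (sub_eq_zero.mp h).symm
    exact (pow_lt_one₀ (abs_nonneg q) hq hj).ne (by rw [← abs_pow, hqj, abs_one])
  refine prod_ne_zero_iff.mpr fun j _ => div_ne_zero (one_sub_pow_ne_zero _ j.succ_ne_zero) ?_
  simpa using one_sub_pow_ne_zero 1 one_ne_zero

lemma qFact_mul_qBinom_mul_qBinom {q : ℝ} (hq : |q| < 1) (m k n : ℕ) :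
    qFact q m * (qBinom q (m + k) m * qBinom q n (m + k)) =
      qFact q n / (qFact q k * qFact q (n - m - k)) := by
  rw [qBinom, qBinom, Nat.add_sub_cancel_left, Nat.sub_sub]
  field_simp [qFact_ne_zero hq]

lemma Finset.Nat.sum_antidiagonalTuple_succ {M : Type*} [AddCommMonoid M] (l m : ℕ)
    (F : (Fin (l + 1) → ℕ) → M) :
    ∑ i ∈ antidiagonalTuple (l + 1) m, F i =
      ∑ p ∈ antidiagonal m, ∑ i ∈ antidiagonalTuple l p.2, F (Fin.cons p.1 i) := by
  rw [sum_sigma']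
  refine sum_nbij' (fun i => ⟨(i 0, m - i 0), Fin.tail i⟩) (fun x => Fin.cons x.1.1 x.2)
    ?_ ?_ ?_ ?_ ?_
  · intro i hi
    rw [mem_antidiagonalTuple, Fin.sum_univ_succ] at hi
    simp only [mem_sigma, HasAntidiagonal.mem_antidiagonal, mem_antidiagonalTuple]
    exact ⟨by omega, by simp only [Fin.tail]; omega⟩
  · rintro ⟨⟨a, b⟩, i⟩ hi
    simp only [mem_sigma, HasAntidiagonal.mem_antidiagonal, mem_antidiagonalTuple] at hi ⊢
    rw [Fin.sum_cons, hi.2, hi.1]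
  · intro i _
    exact Fin.cons_self_tail i
  · rintro ⟨⟨a, b⟩, i⟩ hi
    simp only [mem_sigma, HasAntidiagonal.mem_antidiagonal] at hi
    simp [← hi.1]
  · intro i _
    rw [Fin.cons_self_tail]

lemma PowerSeries.coeff_pow_eq_sum_antidiagonalTuple {R : Type*} [CommSemiring R]
    (f : PowerSeries R) (l m : ℕ) :
    coeff m (f ^ l) = ∑ i ∈ Finset.Nat.antidiagonalTuple l m, ∏ j, coeff (i j) f := by
  induction l generalizing m with
  | zero => cases m <;> simp [Finset.Nat.antidiagonalTuple_zero_succ, coeff_one]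
  | succ l ih =>
    simp only [pow_succ', coeff_mul, Finset.Nat.sum_antidiagonalTuple_succ, ih, Finset.mul_sum,
      Fin.prod_univ_succ, Fin.cons_zero, Fin.cons_succ]

noncomputable def qEGF (q : ℝ) (H : ℕ → ℂ[X]) : PowerSeries ℂ[X] :=
  PowerSeries.mk fun n => C (1 / qFact q n) * H n

lemma IsqFrobeniusEulerOrder.qEGF_mul_eq {q : ℝ} {lam : ℂ} {r : ℕ} {H : ℕ → ℂ[X]}
    (hH : IsqFrobeniusEulerOrder q lam r H) :
    qEGF q H * (qExp q - PowerSeries.C (C lam)) ^ r =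
      PowerSeries.C (C ((1 - lam) ^ r)) * qExpX q :=
  hH

lemma coeff_qEGF (q : ℝ) (H : ℕ → ℂ[X]) (n : ℕ) :
    PowerSeries.coeff n (qEGF q H) = C (1 / qFact q n) * H n :=
  PowerSeries.coeff_mk _ _

lemma coeff_qEGF_mul (q : ℝ) (H : ℕ → ℂ[X]) (G : PowerSeries ℂ[X]) (n : ℕ) :
    PowerSeries.coeff n (qEGF q H * G) =
      ∑ k ∈ range (n + 1), C (1 / qFact q k) * H k * PowerSeries.coeff (n - k) G := by
  simp only [PowerSeries.coeff_mul, Nat.sum_antidiagonal_eq_sum_range_succ_mk, coeff_qEGF]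

lemma coeff_qExp_sub_C_pow (q : ℝ) (lam : ℂ) (r m : ℕ) :
    PowerSeries.coeff m ((qExp q - PowerSeries.C (C lam)) ^ r) =
      C (∑ l ∈ range (r + 1), ∑ i ∈ Nat.antidiagonalTuple l m,
        (r.choose l : ℂ) * (-lam) ^ (r - l) * ∏ j, 1 / qFact q (i j)) := by
  rw [sub_eq_add_neg, ← map_neg, ← map_neg, add_pow, map_sum, map_sum]
  refine sum_congr rfl fun l _ => ?_
  rw [← map_pow, ← map_pow, ← map_natCast (PowerSeries.C.comp C), RingHom.comp_apply,
    PowerSeries.coeff_mul_C, PowerSeries.coeff_mul_C,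
    PowerSeries.coeff_pow_eq_sum_antidiagonalTuple, map_sum, sum_mul, sum_mul]
  refine sum_congr rfl fun i _ => ?_
  simp only [qExp, PowerSeries.coeff_mk, map_mul, map_prod]
  ring

lemma map_compRingHom_zero_qEGF (q : ℝ) (H : ℕ → ℂ[X]) :
    PowerSeries.map (compRingHom 0) (qEGF q H) = qEGF q fun n => C ((H n).eval 0) := by
  ext n
  simp [qEGF, comp_zero]

lemma map_compRingHom_zero_qExp (q : ℝ) : PowerSeries.map (compRingHom 0) (qExp q) = qExp q := by
  ext n
  simp [qExp]

lemma map_compRingHom_zero_qExpX (q : ℝ) : PowerSeries.map (compRingHom 0) (qExpX q) = 1 := by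
  ext (_ | n) <;> simp [qExpX, qFact, PowerSeries.coeff_one]

lemma IsqFrobeniusEulerOrder.qExp_sub_C_mul_qEGF_eval_zero {q : ℝ} {lam : ℂ} {H : ℕ → ℂ[X]}
    (hH : IsqFrobeniusEulerOrder q lam 1 H) :
    (qExp q - PowerSeries.C (C lam)) * qEGF q (fun n => C ((H n).eval 0)) =
      PowerSeries.C (C (1 - lam)) := by
  have := congrArg (PowerSeries.map (compRingHom 0)) hH.qEGF_mul_eq
  simpa [map_compRingHom_zero_qEGF, map_compRingHom_zero_qExp, map_compRingHom_zero_qExpX,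
    mul_comm] using this

lemma IsqFrobeniusEulerOrder.qEGF_eq_qExpX_mul {q : ℝ} {lam : ℂ} (hlam : lam ≠ 1)
    {H : ℕ → ℂ[X]} (hH : IsqFrobeniusEulerOrder q lam 1 H) :
    qEGF q H = qExpX q * qEGF q (fun n => C ((H n).eval 0)) := by
  have hC : PowerSeries.C (C (1 - lam)) ≠ 0 :=
    (map_ne_zero_iff _ PowerSeries.C_injective).mpr <| C_ne_zero.mpr <| sub_ne_zero.mpr hlam.symm
  have hH' := hH.qEGF_mul_eq
  rw [pow_one, pow_one] at hH'
  refine mul_right_cancel₀ hC ?_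
  calc qEGF q H * PowerSeries.C (C (1 - lam))
      = qEGF q H * (qExp q - PowerSeries.C (C lam)) * qEGF q (fun n => C ((H n).eval 0)) := by
        rw [mul_assoc, hH.qExp_sub_C_mul_qEGF_eval_zero]
    _ = _ := by rw [hH']; ring

lemma qEGF_mul_eq_of_isqFrobeniusEulerOrder {q : ℝ} {lam : ℂ} (hlam : lam ≠ 1) {r : ℕ}
    {H1 Hr : ℕ → ℂ[X]} (hH1 : IsqFrobeniusEulerOrder q lam 1 H1)
    (hHr : IsqFrobeniusEulerOrder q lam r Hr) :
    PowerSeries.C (C ((1 - lam) ^ r)) * qEGF q H1 =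
      qEGF q Hr * ((qExp q - PowerSeries.C (C lam)) ^ r *
        qEGF q (fun n => C ((H1 n).eval 0))) := by
  rw [hH1.qEGF_eq_qExpX_mul hlam, ← mul_assoc, ← hHr.qEGF_mul_eq, mul_assoc]

lemma qFact_div_mul_coeff_qExp_sub_C_pow_mul {q : ℝ} (hq : |q| < 1) (lam : ℂ) (r : ℕ)
    (c : ℕ → ℂ) (k n : ℕ) :
    C (qFact q n / qFact q k) * PowerSeries.coeff (n - k)
        ((qExp q - PowerSeries.C (C lam)) ^ r * qEGF q (fun j => C (c j))) =
      C (∑ m ∈ range (n - k + 1), ∑ l ∈ range (r + 1), ∑ i ∈ Nat.antidiagonalTuple l m,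
        (r.choose l : ℂ) * (-lam) ^ (r - l) * (qFact q m / ∏ j, qFact q (i j)) *
          qBinom q (m + k) m * qBinom q n (m + k) * c (n - m - k)) := by
  simp only [PowerSeries.coeff_mul, Nat.sum_antidiagonal_eq_sum_range_succ_mk,
    coeff_qExp_sub_C_pow, coeff_qEGF, ← map_mul, ← map_sum, mul_sum, sum_mul]
  refine congrArg C (sum_congr rfl fun m _ => sum_congr rfl fun l _ => sum_congr rfl
    fun i _ => ?_)
  rw [prod_div_distrib, prod_const_one, Nat.sub_right_comm n k m]
  linear_combination
    (-(r.choose l : ℂ) * (-lam) ^ (r - l) / (∏ j, qFact q (i j)) * c (n - m - k)) *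
      qFact_mul_qBinom_mul_qBinom hq m k n

theorem qFrobeniusEuler_expansion_in_order_r_basis_general
    (q : ℝ) (hq0 : 0 < q) (hq1 : q < 1) (lam : ℂ) (hlam : lam ≠ 1)
    (r : ℕ)
    (H1 : ℕ → Polynomial ℂ) (hH1 : IsqFrobeniusEulerOrder q lam 1 H1)
    (Hr : ℕ → Polynomial ℂ) (hHr : IsqFrobeniusEulerOrder q lam r Hr) (n : ℕ) :
    H1 n = Polynomial.C (1 / (1 - lam) ^ r) *
      ∑ k ∈ Finset.range (n + 1),
        Polynomial.C (∑ m ∈ Finset.range (n - k + 1), ∑ l ∈ Finset.range (r + 1),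
          ∑ i ∈ Finset.Nat.antidiagonalTuple l m,
            (r.choose l : ℂ) * (-lam) ^ (r - l) *
              (qFact q m / ∏ j, qFact q (i j)) *
              qBinom q (m + k) m * qBinom q n (m + k) *
              (H1 (n - m - k)).eval 0) * Hr k := by
  have hq : |q| < 1 := abs_lt.mpr ⟨by linarith, hq1⟩
  have hlamr : (1 - lam) ^ r ≠ 0 := pow_ne_zero r (sub_ne_zero.mpr hlam.symm)
  have hcoeff := congrArg (PowerSeries.coeff n)
    (qEGF_mul_eq_of_isqFrobeniusEulerOrder hlam hH1 hHr)
  rw [PowerSeries.coeff_C_mul, coeff_qEGF, coeff_qEGF_mul] at hcoeff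
  calc H1 n
      = C (qFact q n / (1 - lam) ^ r) * (C ((1 - lam) ^ r) * (C (1 / qFact q n) * H1 n)) := by
        rw [← mul_assoc, ← mul_assoc, ← map_mul, ← map_mul, div_mul_cancel₀ _ hlamr,
          mul_one_div_cancel (qFact_ne_zero hq n), map_one, one_mul]
    _ = _ := by
        rw [hcoeff, mul_sum, mul_sum]
        refine sum_congr rfl fun k _ => ?_
        rw [← qFact_div_mul_coeff_qExp_sub_C_pow_mul hq lam r fun j => (H1 j).eval 0]
        simp only [div_eq_mul_inv, map_mul]
        ring

/-- For `r ≥ 1`,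
`H^{(1)}_{n,q}(x|λ) = (1/(1-λ)^r) ∑_{k=0}^n A_k H^{(r)}_{k,q}(x|λ)` with
`A_k = ∑_{m=0}^{n-k} ∑_{l=0}^r ∑_{i₁+⋯+i_l=m} binom(r,l) (-λ)^{r-l}
  C(m;i₁,…,i_l)_q C(m+k,m)_q C(n,m+k)_q H_{n-m-k,q}(λ)`. -/
theorem qFrobeniusEuler_expansion_in_order_r_basis
    (q : ℝ) (hq0 : 0 < q) (hq1 : q < 1) (lam : ℂ) (hlam : lam ≠ 1)
    (r : ℕ) (hr : 1 ≤ r)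
    (H1 : ℕ → Polynomial ℂ) (hH1 : IsqFrobeniusEulerOrder q lam 1 H1)
    (Hr : ℕ → Polynomial ℂ) (hHr : IsqFrobeniusEulerOrder q lam r Hr) (n : ℕ) :
    H1 n = Polynomial.C (1 / (1 - lam) ^ r) *
      ∑ k ∈ Finset.range (n + 1),
        Polynomial.C (∑ m ∈ Finset.range (n - k + 1), ∑ l ∈ Finset.range (r + 1),
          ∑ i ∈ Finset.Nat.antidiagonalTuple l m,
            (r.choose l : ℂ) * (-lam) ^ (r - l) *
              (qFact q m / ∏ j, qFact q (i j)) *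
              qBinom q (m + k) m * qBinom q n (m + k) *
              (H1 (n - m - k)).eval 0) * Hr k :=
  qFrobeniusEuler_expansion_in_order_r_basis_general q hq0 hq1 lam hlam r H1 hH1 Hr hHr n
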